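/- arXiv:0906.0651 — 2 statements merged into one kernel-verified Lean document; each statement's English description precedes it below -/
import Mathlib

section
/- Let f, n, m be natural numbers with n > 3f and m ≥ n − f. Let P be a multiset of real numbers with card P = n and let U be a sub-multiset of P with card U = m. Then for every x ∈ U, the destination D(x, P) = (min(x, P_(f+1)) + max(x, P_(n−f)))/2 satisfies both D(x, P) ≤ (U_(f+1) + max U)/2 and (min U + U_(m−f))/2 ≤ D(x, P). -/
/-- The k-th smallest element (1-indexed, counted with multiplicity) of a
multiset of real numbers. -/
noncomputable def nth (S : Multiset ℝ) (k : ℕ) : ℝ :=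
  (S.sort (· ≤ ·)).getD (k - 1) 0

/-- The smallest element of a (nonempty) multiset of reals. -/
noncomputable def mmin (S : Multiset ℝ) : ℝ := nth S 1

/-- The largest element of a (nonempty) multiset of reals. -/
noncomputable def mmax (S : Multiset ℝ) : ℝ := nth S S.card

/-- The diameter of a (nonempty) multiset of reals. -/
noncomputable def mdiam (S : Multiset ℝ) : ℝ := mmax S - mmin S

/-!
The correct positions `U` form a sub-multiset of `P` missing only `n - m ≤ f` of its elements, so
the order statistics interlace: `P_(k) ≤ U_(k) ≤ P_(k + n - m)`. Hence `P_(f+1)` lies between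
`min U` and `U_(f+1)`, and `P_(n-f)` between `U_(m-f)` and `max U`, while `x` lies between `min U`
and `max U`. This brackets both endpoints `min x P_(f+1)` and `max x P_(n-f)` of the trimmed
range, and averaging the brackets gives the two bounds.
-/

namespace List

variable {α : Type*} [Preorder α] {l₁ l₂ : List α}

theorem Sublist.getElem_le_getElem_of_pairwise (h : l₁ <+ l₂) (hl₂ : l₂.Pairwise (· ≤ ·))
    {i : ℕ} (hi : i < l₁.length) : l₂[i]'(hi.trans_le h.length_le) ≤ l₁[i] := by
  induction h generalizing i with
  | slnil => simp at hi
  | @cons l₁ l₂ a h ih =>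
    have hlen := h.length_le
    calc (a :: l₂)[i]'(by simp; omega) ≤ (a :: l₂)[i + 1]'(by simp; omega) :=
          hl₂.sortedLE.getElem_le_getElem_of_le (Nat.le_succ i)
      _ ≤ l₁[i] := ih hl₂.of_cons hi
  | @cons_cons l₁ l₂ a h ih =>
    cases i with
    | zero => exact le_rfl
    | succ j => exact ih hl₂.of_cons (by simpa using hi)

theorem Sublist.getElem_le_getElem_add_of_pairwise (h : l₁ <+ l₂) (hl₂ : l₂.Pairwise (· ≤ ·))
    {i : ℕ} (hi : i < l₁.length) :
    l₁[i] ≤ l₂[i + (l₂.length - l₁.length)]'(by have := h.length_le; omega) := by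
  induction h generalizing i with
  | slnil => simp at hi
  | @cons l₁ l₂ a h ih =>
    have hlen := h.length_le
    have hidx : i + ((a :: l₂).length - l₁.length) = i + (l₂.length - l₁.length) + 1 := by
      simp only [length_cons]; omega
    simpa only [hidx, getElem_cons_succ] using ih hl₂.of_cons hi
  | @cons_cons l₁ l₂ a h ih =>
    have hlen := h.length_le
    have hd : (a :: l₂).length - (a :: l₁).length = l₂.length - l₁.length := by
      simp only [length_cons]; omega
    cases i with
    | zero =>
      simp only [hd, getElem_cons_zero, Nat.zero_add]
      exact hl₂.sortedLE.getElem_le_getElem_of_le (i := 0) (hi := by simp) (Nat.zero_le _)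
    | succ j =>
      have hj : j < l₁.length := by simpa using hi
      have hidx : j + 1 + (l₂.length - l₁.length) = j + (l₂.length - l₁.length) + 1 := by omega
      simpa only [hd, hidx, getElem_cons_succ] using ih hl₂.of_cons hj

end List

theorem Multiset.sort_sublist_sort_of_le {α : Type*} [LinearOrder α] {s t : Multiset α}
    (h : s ≤ t) : (s.sort (· ≤ ·)).Sublist (t.sort (· ≤ ·)) :=
  List.sublist_of_subperm_of_pairwise (by rwa [← Multiset.coe_le, Multiset.sort_eq,
    Multiset.sort_eq]) (Multiset.pairwise_sort _ _) (Multiset.pairwise_sort _ _)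

section OrderStatistics

open Multiset

variable {S T : Multiset ℝ} {i j k : ℕ}

theorem nth_eq_getElem (hk : k - 1 < card S) :
    nth S k = (S.sort (· ≤ ·))[k - 1]'(by simpa using hk) :=
  List.getD_eq_getElem _ _ _

theorem nth_le_nth (hij : i ≤ j) (hj : j ≤ card S) : nth S i ≤ nth S j := by
  rcases Nat.eq_zero_or_pos j with rfl | hj0
  · rw [Nat.le_zero.1 hij]
  rw [nth_eq_getElem (by omega), nth_eq_getElem (by omega)]
  exact (S.pairwise_sort _).sortedLE.getElem_le_getElem_of_le (by omega)

theorem exists_nth_eq_of_mem {x : ℝ} (hx : x ∈ S) : ∃ k, 0 < k ∧ k ≤ card S ∧ nth S k = x := by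
  obtain ⟨k, hk, rfl⟩ := List.getElem_of_mem ((S.mem_sort (· ≤ ·)).2 hx)
  rw [length_sort] at hk
  exact ⟨k + 1, k.succ_pos, hk, nth_eq_getElem (by simpa using hk)⟩

theorem mmin_le_of_mem {x : ℝ} (hx : x ∈ S) : mmin S ≤ x := by
  obtain ⟨k, hk0, hk, rfl⟩ := exists_nth_eq_of_mem hx
  exact nth_le_nth hk0 hk

theorem le_mmax_of_mem {x : ℝ} (hx : x ∈ S) : x ≤ mmax S := by
  obtain ⟨k, -, hk, rfl⟩ := exists_nth_eq_of_mem hx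
  exact nth_le_nth hk le_rfl

theorem nth_le_nth_of_le (hTS : T ≤ S) (hk0 : 0 < k) (hk : k ≤ card T) : nth S k ≤ nth T k := by
  have hsub := sort_sublist_sort_of_le hTS
  rw [nth_eq_getElem (by have := card_le_card hTS; omega), nth_eq_getElem (by omega)]
  exact hsub.getElem_le_getElem_of_pairwise (S.pairwise_sort _) _

theorem nth_le_nth_add_of_le (hTS : T ≤ S) (hk0 : 0 < k) (hk : k ≤ card T) :
    nth T k ≤ nth S (k + (card S - card T)) := by
  have hsub := sort_sublist_sort_of_le hTS
  have hTS' := card_le_card hTS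
  have hidx : k + (card S - card T) - 1 =
      k - 1 + ((S.sort (· ≤ ·)).length - (T.sort (· ≤ ·)).length) := by
    simp only [length_sort]; omega
  rw [nth_eq_getElem (by omega), nth_eq_getElem (by omega)]
  simp only [hidx]
  exact hsub.getElem_le_getElem_add_of_pairwise (S.pairwise_sort _) _

end OrderStatistics

theorem stmt7 (f n m : ℕ) (P U : Multiset ℝ)
    (hn : n > 3 * f) (hm : m ≥ n - f)
    (hP : Multiset.card P = n) (hU : U ≤ P) (hUm : Multiset.card U = m) :
    ∀ x ∈ U,
      (min x (nth P (f + 1)) + max x (nth P (n - f))) / 2 ≤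
        (nth U (f + 1) + mmax U) / 2 ∧
      (mmin U + nth U (m - f)) / 2 ≤
        (min x (nth P (f + 1)) + max x (nth P (n - f))) / 2 := by
  intro x hx
  have hmn : m ≤ n := hP ▸ hUm ▸ Multiset.card_le_card hU
  have hshift : Multiset.card P - Multiset.card U = n - m := by rw [hP, hUm]
  have hlow : mmin U ≤ nth P (f + 1) ∧ nth P (f + 1) ≤ nth U (f + 1) := by
    refine ⟨?_, nth_le_nth_of_le hU (by omega) (by omega)⟩
    calc mmin U ≤ nth P (1 + (n - m)) := hshift ▸ nth_le_nth_add_of_le hU one_pos (by omega)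
      _ ≤ nth P (f + 1) := nth_le_nth (by omega) (by omega)
  have hhigh : nth U (m - f) ≤ nth P (n - f) ∧ nth P (n - f) ≤ mmax U := by
    constructor
    · calc nth U (m - f) ≤ nth P (m - f + (n - m)) :=
            hshift ▸ nth_le_nth_add_of_le hU (by omega) (by omega)
        _ = nth P (n - f) := by congr 1; omega
    · calc nth P (n - f) ≤ nth P m := nth_le_nth (by omega) (by omega)
        _ ≤ nth U m := nth_le_nth_of_le hU (by omega) (by omega)
        _ = mmax U := by rw [mmax, hUm]
  constructor
  · linarith [min_le_right x (nth P (f + 1)), max_le (le_mmax_of_mem hx) hhigh.2, hlow.2]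
  · linarith [le_min (mmin_le_of_mem hx) hlow.1, le_max_right x (nth P (n - f)), hhigh.1]
end

section
/- Let f, n, m be natural numbers with n > 3f and m ≥ n − f. Let P be a multiset of real numbers with card P = n and let U be a sub-multiset of P with card U = m. Let x ∈ U and let b be a real number. If the destination D(x, P) = (min(x, P_(f+1)) + max(x, P_(n−f)))/2 satisfies D(x, P) < min U + b, then the upper end of the trimmed range satisfies max(x, P_(n−f)) < min U + 2b. -/
/-! The key point: only the at most `f` Byzantine positions can lie below `min U`, so the
`(f+1)`-st smallest position is at least `min U`; hence so is the lower end `min(x, P_(f+1))`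
of the trimmed range, and the bound on the midpoint transfers to the upper end. -/

lemma sortedLE_sort (S : Multiset ℝ) : (S.sort (· ≤ ·)).SortedLE :=
  List.sortedLE_iff_pairwise.2 (Multiset.pairwise_sort S _)

lemma nth_succ_eq_getElem {S : Multiset ℝ} {k : ℕ} (hk : k < (S.sort (· ≤ ·)).length) :
    nth S (k + 1) = (S.sort (· ≤ ·))[k] := by
  simp [nth, List.getD_eq_getElem?_getD, List.getElem?_eq_getElem hk]

lemma mmin_le_of_mem_s9 {S : Multiset ℝ} {y : ℝ} (hy : y ∈ S) : mmin S ≤ y := by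
  obtain ⟨j, hj, rfl⟩ := List.getElem_of_mem ((Multiset.mem_sort (· ≤ ·)).2 hy)
  rw [mmin, nth_succ_eq_getElem (by omega)]
  exact (sortedLE_sort S).getElem_le_getElem_of_le (Nat.zero_le j)

lemma succ_le_countP_of_nth_succ_lt {S : Multiset ℝ} {k : ℕ} {c : ℝ}
    (hk : k < Multiset.card S) (h : nth S (k + 1) < c) :
    k + 1 ≤ S.countP (· < c) := by
  set l := S.sort (· ≤ ·)
  have hkl : k < l.length := by rwa [Multiset.length_sort]
  rw [nth_succ_eq_getElem hkl] at h
  have hprefix : ∀ y ∈ l.take (k + 1), y < c := by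
    intro y hy
    obtain ⟨i, hi, rfl⟩ := List.mem_take_iff_getElem.1 hy
    exact ((sortedLE_sort S).getElem_le_getElem_of_le (by omega)).trans_lt h
  calc k + 1 = (l.take (k + 1)).countP (· < c) := by
        rw [List.countP_eq_length.2 (by simpa using hprefix), List.length_take]; omega
    _ ≤ l.countP (· < c) := (List.take_sublist _ _).countP_le
    _ = S.countP (· < c) := by rw [← Multiset.coe_countP, Multiset.sort_eq]

lemma countP_lt_le_card_sub {P U : Multiset ℝ} {c : ℝ} (hU : U ≤ P) (hc : ∀ y ∈ U, c ≤ y) :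
    P.countP (· < c) ≤ Multiset.card P - Multiset.card U := by
  have hUc : U.countP (· < c) = 0 :=
    Multiset.countP_eq_zero.2 fun y hy => not_lt.2 (hc y hy)
  calc P.countP (· < c) = (P - U).countP (· < c) + U.countP (· < c) := by
        rw [← Multiset.countP_add, tsub_add_cancel_of_le hU]
    _ ≤ Multiset.card (P - U) := by rw [hUc]; exact Multiset.countP_le_card _ _
    _ = Multiset.card P - Multiset.card U := Multiset.card_sub hU

lemma le_nth_succ_of_le_of_card_sub_le {P U : Multiset ℝ} {c : ℝ} {k : ℕ} (hU : U ≤ P)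
    (hc : ∀ y ∈ U, c ≤ y) (hkU : Multiset.card P - Multiset.card U ≤ k)
    (hkP : k < Multiset.card P) : c ≤ nth P (k + 1) := by
  by_contra! h
  have := succ_le_countP_of_nth_succ_lt hkP h
  have := countP_lt_le_card_sub hU hc
  omega

theorem stmt9 (f n m : ℕ) (P U : Multiset ℝ) (x b : ℝ)
    (hn : n > 3 * f) (hm : m ≥ n - f)
    (hP : Multiset.card P = n) (hU : U ≤ P) (hUm : Multiset.card U = m)
    (hx : x ∈ U)
    (hD : (min x (nth P (f + 1)) + max x (nth P (n - f))) / 2 < mmin U + b) :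
    max x (nth P (n - f)) < mmin U + 2 * b := by
  have hlow : mmin U ≤ min x (nth P (f + 1)) :=
    le_min (mmin_le_of_mem_s9 hx)
      (le_nth_succ_of_le_of_card_sub_le hU (fun _ => mmin_le_of_mem_s9) (by omega) (by omega))
  linarith
end
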